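/- arXiv:math/0412091 — 4 statements merged into one kernel-verified Lean document; each statement's English description precedes it below -/
import Mathlib

section
/- The C_a ≀ S_n Eulerian polynomials A_{a,ℓ,n}(t) = Σ_{σ∈C_a≀S_n} t^{des_L(σ)} satisfy the differential recurrence A_{a,ℓ,n}(t) = (a − ℓ + (a(n−1)+ℓ)t)·A_{a,ℓ,n-1}(t) + a t(1−t)·A'_{a,ℓ,n-1}(t), where A' denotes the derivative in t. -/
set_option linter.unusedSectionVars false
set_option linter.unreachableTactic false
set_option linter.unusedTactic false

open Finset Polynomial
open scoped Classical

/-- An element of the wreath product `C_a ≀ S_n`, viewed as a colored permutation: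
the window is `[σ(1),…,σ(n)]` where `|σ(i)| = π(i)` (1-based) and the color of the
letter in position `i` is `c(i)`, i.e. `σ(i) = α^{c(i)} |σ(i)|`. -/
abbrev ColPerm (a n : ℕ) := Equiv.Perm (Fin n) × (Fin n → Fin a)

/-- A rank function realizing (a canonical choice of) the linear order `<_L` of
Regev–Roichman on the letters `α^t j` (encoded as the pair `(t, j)` with `1 ≤ j`)
together with `0` (encoded as `(t, 0)`): letters with color in `L` are negative,
ordered with larger absolute value smaller; letters with color not in `L` are
positive, ordered with larger absolute value larger; `x <_L y ↔ rkL L x < rkL L y`. -/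
def rkL {a : ℕ} (L : Finset (Fin a)) (x : Fin a × ℕ) : ℤ :=
  if x.2 = 0 then 0
  else if x.1 ∈ L then -((x.2 : ℤ) * a + (x.1 : ℤ)) else (x.2 : ℤ) * a + (x.1 : ℤ)

/-- The letter `σ(i)` (as a color/absolute-value pair) in position `i` (1-based) of
the window of `σ`; positions outside `{1,…,n}` give the letter `0`. -/
def wval {a n : ℕ} [NeZero a] (σ : ColPerm a n) (i : ℕ) : Fin a × ℕ :=
  if h : 1 ≤ i ∧ i ≤ n then (σ.2 ⟨i - 1, by omega⟩, (σ.1 ⟨i - 1, by omega⟩ : ℕ) + 1)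
  else (0, 0)

/-- The `L`-descent set `Des_L(σ) = {0 ≤ i ≤ n-1 : σ(i) >_L σ(i+1)}`, with `σ(0) := 0`. -/
def DesL {a n : ℕ} [NeZero a] (L : Finset (Fin a)) (σ : ColPerm a n) : Finset ℕ :=
  (Finset.range n).filter (fun i => rkL L (wval σ (i + 1)) < rkL L (wval σ i))

/-- The `L`-descent number `des_L(σ) = |Des_L(σ)|`. -/
def desL {a n : ℕ} [NeZero a] (L : Finset (Fin a)) (σ : ColPerm a n) : ℕ := (DesL L σ).card

/-- The `L`-reverse major index `rmaj_{L,n}(σ) = Σ_{i ∈ Des_L(σ)} (n - i)`. -/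
def rmajL {a n : ℕ} [NeZero a] (L : Finset (Fin a)) (σ : ColPerm a n) : ℕ :=
  ∑ i ∈ DesL L σ, (n - i)

/-- The `C_a ≀ S_n` Eulerian number `A_{a,L,n,s} = #{σ ∈ C_a≀S_n : des_L σ = s}`. -/
noncomputable def Anum (a n s : ℕ) [NeZero a] (L : Finset (Fin a)) : ℕ :=
  (Finset.univ.filter (fun σ : ColPerm a n => desL L σ = s)).card

/-- The `C_a ≀ S_n` Eulerian polynomial `A_{a,L,n}(t) = Σ_{σ ∈ C_a≀S_n} t^{des_L σ}`. -/
noncomputable def Aeul (a n : ℕ) [NeZero a] (L : Finset (Fin a)) : Polynomial ℚ :=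
  ∑ σ : ColPerm a n, X ^ desL L σ

section Ins

variable {a m : ℕ} [NeZero a]

/-- Insert the letter with largest absolute value `m+1` and color `c` at window
position `p+1` (0-based position `p`). -/
def ins (τ : ColPerm a m) (p : Fin (m+1)) (c : Fin a) : ColPerm a (m+1) :=
  ⟨(finSuccEquiv' p).trans ((Equiv.optionCongr τ.1).trans (finSuccEquiv' (Fin.last m)).symm),
   fun i => (finSuccEquiv' p i).elim c τ.2⟩

@[simp] lemma ins_fst_self (τ : ColPerm a m) (p : Fin (m+1)) (c : Fin a) :
    (ins τ p c).1 p = Fin.last m := by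
  simp [ins, finSuccEquiv'_at, finSuccEquiv'_symm_none]

@[simp] lemma ins_fst_succAbove (τ : ColPerm a m) (p : Fin (m+1)) (c : Fin a) (j : Fin m) :
    (ins τ p c).1 (p.succAbove j) = (τ.1 j).castSucc := by
  simp [ins, finSuccEquiv'_succAbove, finSuccEquiv'_symm_some]

@[simp] lemma ins_snd_self (τ : ColPerm a m) (p : Fin (m+1)) (c : Fin a) :
    (ins τ p c).2 p = c := by
  simp [ins, finSuccEquiv'_at]

@[simp] lemma ins_snd_succAbove (τ : ColPerm a m) (p : Fin (m+1)) (c : Fin a) (j : Fin m) :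
    (ins τ p c).2 (p.succAbove j) = τ.2 j := by
  simp [ins, finSuccEquiv'_succAbove]

lemma succAbove_mk_lt (p : Fin (m+1)) (k : ℕ) (hk : k < m) (h : k < p.val) :
    p.succAbove ⟨k, hk⟩ = ⟨k, by omega⟩ := by
  rw [Fin.succAbove_of_castSucc_lt]
  · rfl
  · exact h

set_option linter.unusedSectionVars false

lemma succAbove_mk_ge (p : Fin (m+1)) (k : ℕ) (hk : k < m) (h : p.val ≤ k) :
    p.succAbove ⟨k, hk⟩ = ⟨k + 1, by omega⟩ := by
  rw [Fin.succAbove_of_le_castSucc]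
  · rfl
  · exact h

lemma wval_ins_le (τ : ColPerm a m) (p : Fin (m+1)) (c : Fin a) {i : ℕ} (hi : i ≤ p.val) :
    wval (ins τ p c) i = wval τ i := by
  rcases Nat.eq_zero_or_pos i with h0 | h1
  · subst h0; simp [wval]
  · have hpm : p.val ≤ m := by omega
    have him : i ≤ m := le_trans hi hpm
    have hlt : i - 1 < m := by omega
    rw [wval, dif_pos ⟨h1, by omega⟩, wval, dif_pos ⟨h1, him⟩]
    have hmk : (⟨i - 1, by omega⟩ : Fin (m+1)) = p.succAbove ⟨i - 1, hlt⟩ := by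
      rw [succAbove_mk_lt p (i-1) hlt (by omega)]
    rw [hmk, ins_fst_succAbove, ins_snd_succAbove]
    simp

lemma wval_ins_self (τ : ColPerm a m) (p : Fin (m+1)) (c : Fin a) :
    wval (ins τ p c) (p.val + 1) = (c, m + 1) := by
  rw [wval, dif_pos ⟨by omega, by omega⟩]
  have hmk : (⟨p.val + 1 - 1, by omega⟩ : Fin (m+1)) = p := by
    apply Fin.ext; simp
  rw [hmk, ins_fst_self, ins_snd_self]
  simp [Fin.last]

lemma wval_ins_ge (τ : ColPerm a m) (p : Fin (m+1)) (c : Fin a) {i : ℕ}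
    (h2 : p.val + 2 ≤ i) (hm : i ≤ m + 1) :
    wval (ins τ p c) i = wval τ (i - 1) := by
  have hlt : i - 2 < m := by omega
  rw [wval, dif_pos ⟨by omega, hm⟩, wval, dif_pos ⟨by omega, by omega⟩]
  have hmk : (⟨i - 1, by omega⟩ : Fin (m+1)) = p.succAbove ⟨i - 2, hlt⟩ := by
    rw [succAbove_mk_ge p (i-2) hlt (by omega)]
    apply Fin.ext; simp; omega
  rw [hmk, ins_fst_succAbove, ins_snd_succAbove]
  have : (⟨i - 1 - 1, by omega⟩ : Fin m) = ⟨i - 2, hlt⟩ := by apply Fin.ext; simp; omega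
  rw [this]
  simp

lemma rk_wval_bounds (L : Finset (Fin a)) (τ : ColPerm a m) (i : ℕ) :
    -(((m : ℤ) + 1) * a) < rkL L (wval τ i) ∧ rkL L (wval τ i) < ((m : ℤ) + 1) * a := by
  have ha : 0 < a := Nat.pos_of_ne_zero (NeZero.ne a)
  rw [wval]
  split
  · set j : Fin m := τ.1 ⟨i - 1, by omega⟩
    set col : Fin a := τ.2 ⟨i - 1, by omega⟩
    have hj : (j : ℕ) < m := j.isLt
    have hcol : (col : ℕ) < a := col.isLt
    have hb : ((j : ℕ) + 1) * a + (col : ℕ) < (m + 1) * a := by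
      have h1 : ((j : ℕ) + 1) * a ≤ m * a := Nat.mul_le_mul_right a (by omega)
      have h2 : (m + 1) * a = m * a + a := by ring
      omega
    have hb' : (((j : ℕ) : ℤ) + 1) * a + ((col : ℕ) : ℤ) < ((m : ℤ) + 1) * a := by
      exact_mod_cast hb
    rw [rkL]
    simp only
    rw [if_neg (by omega)]
    have hnn : (0 : ℤ) ≤ (((j : ℕ) : ℤ) + 1) * a + ((col : ℕ) : ℤ) := by positivity
    have hpos : (0 : ℤ) < ((m : ℤ) + 1) * a := by positivity
    split
    · constructor
      · push_cast
        linarith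
      · push_cast
        linarith
    · constructor
      · push_cast
        linarith
      · push_cast
        linarith
  · rw [rkL, if_pos rfl]
    have : (0 : ℤ) < ((m : ℤ) + 1) * a := by positivity
    constructor <;> linarith

lemma rk_new_mem (L : Finset (Fin a)) (c : Fin a) (hc : c ∈ L) :
    rkL L (c, m + 1) = -(((m : ℤ) + 1) * a + (c : ℤ)) := by
  rw [rkL, if_neg (by omega), if_pos hc]
  push_cast
  ring_nf

lemma rk_new_not_mem (L : Finset (Fin a)) (c : Fin a) (hc : c ∉ L) :
    rkL L (c, m + 1) = ((m : ℤ) + 1) * a + (c : ℤ) := by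
  rw [rkL, if_neg (by omega), if_neg hc]
  push_cast
  ring_nf

lemma desL_ins (L : Finset (Fin a)) (τ : ColPerm a m) (p : Fin (m+1)) (c : Fin a) :
    desL L (ins τ p c) =
      if p.val ∈ DesL L τ ∨ (c ∉ L ∧ p.val = m) then desL L τ else desL L τ + 1 := by
  have ha : 0 < a := Nat.pos_of_ne_zero (NeZero.ne a)
  set σ := ins τ p c with hσ
  set P' : ℕ → Prop := fun i => rkL L (wval σ (i + 1)) < rkL L (wval σ i) with hP'
  set D := DesL L τ with hD
  have hDmem : ∀ i, i ∈ D ↔ i < m ∧ rkL L (wval τ (i + 1)) < rkL L (wval τ i) := by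
    intro i; rw [hD, DesL, Finset.mem_filter, Finset.mem_range]
  have hpm : p.val ≤ m := by omega
  -- C1
  have C1 : ∀ i < p.val, (if P' i then 1 else 0) = (if i ∈ D then 1 else 0) := by
    intro i hi
    have e1 : wval σ i = wval τ i := wval_ins_le τ p c (le_of_lt hi)
    have e2 : wval σ (i + 1) = wval τ (i + 1) := wval_ins_le τ p c (by omega)
    have : P' i ↔ i ∈ D := by
      rw [hP', hDmem]
      simp only [e1, e2]
      constructor
      · intro h; exact ⟨by omega, h⟩
      · intro h; exact h.2
    simp [this]
  -- C2
  have C2 : (if P' p.val then 1 else 0) = (if c ∈ L then 1 else 0) := by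
    have e1 : wval σ p.val = wval τ p.val := wval_ins_le τ p c le_rfl
    have e2 : wval σ (p.val + 1) = (c, m + 1) := wval_ins_self τ p c
    have hb := rk_wval_bounds L τ p.val
    by_cases hc : c ∈ L
    · rw [if_pos hc, if_pos]
      rw [hP']
      simp only [e1, e2]
      rw [rk_new_mem L c hc]
      have : (0 : ℤ) ≤ (c : ℤ) := by positivity
      linarith [hb.1]
    · rw [if_neg hc, if_neg]
      rw [hP']
      simp only [e1, e2]
      rw [rk_new_not_mem L c hc]
      have : (0 : ℤ) ≤ (c : ℤ) := by positivity
      push_neg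
      linarith [hb.2]
  -- C3
  have C3 : p.val < m → (if P' (p.val + 1) then 1 else 0) = (if c ∈ L then 0 else 1) := by
    intro hplt
    have e1 : wval σ (p.val + 1) = (c, m + 1) := wval_ins_self τ p c
    have e2 : wval σ (p.val + 2) = wval τ (p.val + 1) := wval_ins_ge τ p c (by omega) (by omega)
    have hb := rk_wval_bounds L τ (p.val + 1)
    have hc0 : (0 : ℤ) ≤ (c : ℤ) := by positivity
    by_cases hc : c ∈ L
    · rw [if_pos hc, if_neg]
      rw [hP']
      have e2' : wval σ (p.val + 1 + 1) = wval τ (p.val + 1) := e2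
      simp only [e1, e2']
      rw [rk_new_mem L c hc]
      push_neg
      linarith [hb.1]
    · rw [if_neg hc, if_pos]
      rw [hP']
      have e2' : wval σ (p.val + 1 + 1) = wval τ (p.val + 1) := e2
      simp only [e1, e2']
      rw [rk_new_not_mem L c hc]
      linarith [hb.2]
  -- C4
  have C4 : ∀ i, p.val + 2 ≤ i → i ≤ m → ((if P' i then 1 else 0) = if (i-1) ∈ D then 1 else 0) := by
    intro i h2 hm
    have e1 : wval σ i = wval τ (i - 1) := wval_ins_ge τ p c h2 (by omega)
    have e2 : wval σ (i + 1) = wval τ i := by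
      have := wval_ins_ge τ p c (i := i + 1) (by omega) (by omega)
      simpa using this
    have : P' i ↔ (i - 1) ∈ D := by
      rw [hP', hDmem]
      simp only [e1, e2]
      have : i - 1 + 1 = i := by omega
      rw [this]
      constructor
      · intro h; exact ⟨by omega, h⟩
      · intro h; exact h.2
    simp [this]
  -- express desL σ as a sum over range (m+1)
  have hdσ : desL L σ = ∑ i ∈ Finset.range (m+1), (if P' i then 1 else 0) := by
    rw [desL, DesL, Finset.card_filter]
  have hsub : D ⊆ Finset.range m := fun i hi => Finset.mem_range.mpr ((hDmem i).1 hi).1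
  have hdτ : desL L τ = ∑ i ∈ Finset.range m, (if i ∈ D then 1 else 0) := by
    rw [Finset.sum_ite_mem, Finset.inter_eq_right.mpr hsub, desL, ← hD,
      Finset.card_eq_sum_ones]
  -- split the sums
  have hsplitσ : ∑ i ∈ Finset.range (m+1), (if P' i then 1 else 0)
      = (∑ i ∈ Finset.Ico 0 p.val, if P' i then 1 else 0) + (if P' p.val then 1 else 0)
        + (∑ i ∈ Finset.Ico (p.val+1) (m+1), if P' i then 1 else 0) := by
    rw [Finset.range_eq_Ico,
        ← Finset.sum_Ico_consecutive _ (Nat.zero_le p.val) (by omega : p.val ≤ m+1),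
        ← Finset.sum_Ico_consecutive _ (by omega : p.val ≤ p.val+1) (by omega : p.val+1 ≤ m+1),
        Nat.Ico_succ_singleton, Finset.sum_singleton]
    ring
  have h1 : (∑ i ∈ Finset.Ico 0 p.val, if P' i then 1 else 0)
      = ∑ i ∈ Finset.Ico 0 p.val, (if i ∈ D then 1 else 0) :=
    Finset.sum_congr rfl (fun i hi => C1 i (Finset.mem_Ico.mp hi).2)
  by_cases hpe : p.val = m
  · -- p at the end
    have hIco : Finset.Ico (p.val+1) (m+1) = (∅ : Finset ℕ) := by
      rw [hpe]; exact Finset.Ico_self _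
    have hpD : p.val ∉ D := by
      intro h
      have := ((hDmem p.val).1 h).1
      omega
    have hτeq : desL L τ = ∑ i ∈ Finset.Ico 0 p.val, (if i ∈ D then 1 else 0) := by
      rw [hdτ, Finset.range_eq_Ico, hpe]
    have hσeq : desL L σ = desL L τ + (if c ∈ L then 1 else 0) := by
      rw [hdσ, hsplitσ, hIco, Finset.sum_empty, h1, C2, hτeq]
      ring
    by_cases hc : c ∈ L
    · rw [hσeq, if_pos hc, if_neg (by simp [hpD, hc])]
    · rw [hσeq, if_neg hc, if_pos (Or.inr ⟨hc, hpe⟩)]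
      omega
  · have hplt : p.val < m := by omega
    have hsplit2 : (∑ i ∈ Finset.Ico (p.val+1) (m+1), if P' i then 1 else 0)
        = (if P' (p.val+1) then 1 else 0)
          + ∑ i ∈ Finset.Ico (p.val+2) (m+1), (if P' i then 1 else 0) := by
      rw [← Finset.sum_Ico_consecutive _ (by omega : p.val+1 ≤ p.val+2) (by omega : p.val+2 ≤ m+1),
          Nat.Ico_succ_singleton, Finset.sum_singleton]
    have h2 : (∑ i ∈ Finset.Ico (p.val+2) (m+1), if P' i then 1 else 0)
        = ∑ i ∈ Finset.Ico (p.val+1) m, (if i ∈ D then 1 else 0) := by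
      rw [Finset.sum_Ico_eq_sum_range, Finset.sum_Ico_eq_sum_range]
      have hn : m + 1 - (p.val + 2) = m - (p.val + 1) := by omega
      rw [hn]
      apply Finset.sum_congr rfl
      intro i hi
      rw [Finset.mem_range] at hi
      have := C4 (p.val + 2 + i) (by omega) (by omega)
      rw [this]
      have he : p.val + 2 + i - 1 = p.val + 1 + i := by omega
      rw [he]
    have hτeq : desL L τ = (∑ i ∈ Finset.Ico 0 p.val, (if i ∈ D then 1 else 0))
        + (if p.val ∈ D then 1 else 0)
        + ∑ i ∈ Finset.Ico (p.val+1) m, (if i ∈ D then 1 else 0) := by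
      rw [hdτ, Finset.range_eq_Ico,
          ← Finset.sum_Ico_consecutive _ (Nat.zero_le p.val) (by omega : p.val ≤ m),
          ← Finset.sum_Ico_consecutive _ (by omega : p.val ≤ p.val+1) (by omega : p.val+1 ≤ m),
          Nat.Ico_succ_singleton, Finset.sum_singleton]
      ring
    have hσeq : desL L σ = (∑ i ∈ Finset.Ico 0 p.val, (if i ∈ D then 1 else 0))
        + (if c ∈ L then 1 else 0) + (if c ∈ L then 0 else 1)
        + ∑ i ∈ Finset.Ico (p.val+1) m, (if i ∈ D then 1 else 0) := by
      rw [hdσ, hsplitσ, hsplit2, h1, C2, C3 hplt, h2]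
      ring
    by_cases hpD : p.val ∈ D
    · rw [if_pos (Or.inl hpD)]
      rw [hσeq, hτeq, if_pos hpD]
      by_cases hc : c ∈ L <;> simp only [hc, if_true, if_false] <;> omega
    · rw [if_neg (by simp [hpD, hpe])]
      rw [hσeq, hτeq, if_neg hpD]
      by_cases hc : c ∈ L <;> simp only [hc, if_true, if_false] <;> omega

lemma ins_bijective :
    Function.Bijective (fun x : ColPerm a m × Fin (m+1) × Fin a => ins x.1 x.2.1 x.2.2) := by
  rw [Fintype.bijective_iff_injective_and_card]
  constructor
  · rintro ⟨τ, p, c⟩ ⟨τ', p', c'⟩ h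
    simp only at h
    have hperm : (ins τ p c).1 = (ins τ' p' c').1 := by rw [h]
    have hcol : (ins τ p c).2 = (ins τ' p' c').2 := by rw [h]
    have happ : ∀ x, (ins τ p c).1 x = (ins τ' p' c').1 x := fun x => by rw [hperm]
    have hp : p = p' := by
      have h1 : (ins τ' p' c').1 p = Fin.last m := by rw [← happ p, ins_fst_self]
      have h2 : (ins τ' p' c').1 p' = Fin.last m := ins_fst_self τ' p' c'
      exact (ins τ' p' c').1.injective (h1.trans h2.symm)
    subst hp
    have hτ1 : τ.1 = τ'.1 := by
      apply Equiv.ext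
      intro j
      have := happ (p.succAbove j)
      rw [ins_fst_succAbove, ins_fst_succAbove] at this
      exact Fin.castSucc_injective m this
    have hτ2 : τ.2 = τ'.2 := by
      funext j
      have : (ins τ p c).2 (p.succAbove j) = (ins τ' p c').2 (p.succAbove j) := by rw [hcol]
      rwa [ins_snd_succAbove, ins_snd_succAbove] at this
    have hc : c = c' := by
      have : (ins τ p c).2 p = (ins τ' p c').2 p := by rw [hcol]
      rwa [ins_snd_self, ins_snd_self] at this
    subst hc
    have : τ = τ' := Prod.ext hτ1 hτ2
    rw [this]
  · simp only [Fintype.card_prod, Fintype.card_perm, Fintype.card_fun, Fintype.card_fin]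
    rw [Nat.factorial_succ]
    ring

end Ins

section Count

variable {a m : ℕ} [NeZero a]

lemma per_tau (s l : ℕ) (hs : s ≤ m) (hl : l ≤ a) :
    (l • ((s • ((X:ℚ[X]) ^ s)) + ((m+1-s) • (X:ℚ[X])^(s+1))))
      + ((a - l) • (((s+1) • ((X:ℚ[X])^s)) + ((m - s) • (X:ℚ[X])^(s+1))))
    = (C ((a:ℚ) - l) + C ((a:ℚ) * m + l) * X) * X ^ s
      + C (a:ℚ) * X * (1 - X) * derivative ((X:ℚ[X]) ^ s) := by
  rw [derivative_X_pow]
  simp only [nsmul_eq_mul, map_sub, map_add, map_mul, Polynomial.C_eq_natCast]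
  push_cast [Nat.cast_sub hs, Nat.cast_sub hl, Nat.cast_sub (show s ≤ m + 1 by omega)]
  rcases s with _ | s'
  · simp
    ring
  · have h1 : s' + 1 - 1 = s' := rfl
    rw [h1]
    push_cast
    ring

lemma inner_p_sum (L : Finset (Fin a)) (τ : ColPerm a m) (c : Fin a) :
    (∑ p : Fin (m+1), if ((p:ℕ) ∈ DesL L τ ∨ (c ∉ L ∧ (p:ℕ) = m))
        then (X:ℚ[X]) ^ desL L τ else (X:ℚ[X]) ^ (desL L τ + 1))
    = if c ∈ L
      then (desL L τ • ((X:ℚ[X]) ^ desL L τ) + (m+1-desL L τ) • (X:ℚ[X]) ^ (desL L τ + 1))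
      else ((desL L τ + 1) • ((X:ℚ[X]) ^ desL L τ) + (m-desL L τ) • (X:ℚ[X]) ^ (desL L τ + 1)) := by
  set D := DesL L τ with hD
  have hsubD : ∀ i, i ∈ D → i < m := by
    intro i hi
    have : i ∈ Finset.range m := Finset.mem_filter.mp hi |>.1
    exact Finset.mem_range.mp this
  have hs : desL L τ = D.card := rfl
  rw [Fin.sum_univ_eq_sum_range
      (fun i => if (i ∈ D ∨ (c ∉ L ∧ i = m)) then (X:ℚ[X]) ^ desL L τ else (X:ℚ[X]) ^ (desL L τ + 1))
      (m+1)]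
  rw [Finset.sum_ite, Finset.sum_const, Finset.sum_const]
  have hcc := Finset.card_filter_add_card_filter_not
    (s := Finset.range (m+1)) (p := fun i => (i ∈ D ∨ (c ∉ L ∧ i = m)))
  rw [Finset.card_range] at hcc
  by_cases hc : c ∈ L
  · have hfilter : (Finset.range (m+1)).filter (fun i => (i ∈ D ∨ (c ∉ L ∧ i = m))) = D := by
      ext i
      simp only [Finset.mem_filter, Finset.mem_range, hc, not_true_eq_false, false_and, or_false]
      exact ⟨fun h => h.2, fun h => ⟨by have := hsubD i h; omega, h⟩⟩
    rw [hfilter] at hcc ⊢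
    have hneg : ((Finset.range (m+1)).filter (fun i => ¬(i ∈ D ∨ (c ∉ L ∧ i = m)))).card
        = m + 1 - D.card := by omega
    rw [hneg, if_pos hc, hs]
  · have hfilter : (Finset.range (m+1)).filter (fun i => (i ∈ D ∨ (c ∉ L ∧ i = m)))
        = insert m D := by
      ext i
      simp only [Finset.mem_filter, Finset.mem_range, hc, not_false_eq_true, true_and,
        Finset.mem_insert]
      constructor
      · rintro ⟨h1, h2 | h2⟩
        · exact Or.inr h2
        · exact Or.inl h2
      · rintro (h | h)
        · exact ⟨by omega, Or.inr h⟩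
        · exact ⟨by have := hsubD i h; omega, Or.inl h⟩
    have hm : m ∉ D := fun h => absurd (hsubD m h) (lt_irrefl m)
    have hcard : ((Finset.range (m+1)).filter (fun i => (i ∈ D ∨ (c ∉ L ∧ i = m)))).card
        = D.card + 1 := by
      rw [hfilter, Finset.card_insert_of_notMem hm]
    rw [hcard] at hcc ⊢
    have hDm : D.card ≤ m := by
      have : D ⊆ Finset.range m := fun i hi => Finset.mem_range.mpr (hsubD i hi)
      have := Finset.card_le_card this
      rwa [Finset.card_range] at this
    have hneg : ((Finset.range (m+1)).filter (fun i => ¬(i ∈ D ∨ (c ∉ L ∧ i = m)))).card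
        = m - D.card := by omega
    rw [hneg, if_neg hc, hs]

lemma sum_ins_tau (L : Finset (Fin a)) (τ : ColPerm a m) :
    (∑ y : Fin (m+1) × Fin a, (X:ℚ[X]) ^ desL L (ins τ y.1 y.2))
    = (C ((a:ℚ) - L.card) + C ((a:ℚ) * m + L.card) * X) * X ^ desL L τ
      + C (a:ℚ) * X * (1 - X) * derivative ((X:ℚ[X]) ^ desL L τ) := by
  have hs : desL L τ ≤ m := by
    have h1 : (DesL L τ).card ≤ (Finset.range m).card :=
      Finset.card_le_card (Finset.filter_subset _ _)
    rwa [Finset.card_range] at h1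
  have hl : L.card ≤ a := by
    have := Finset.card_le_univ L
    simpa using this
  rw [Fintype.sum_prod_type]
  have step1 : ∀ p : Fin (m+1), ∀ c : Fin a,
      (X:ℚ[X]) ^ desL L (ins τ p c)
      = if ((p:ℕ) ∈ DesL L τ ∨ (c ∉ L ∧ (p:ℕ) = m))
        then (X:ℚ[X]) ^ desL L τ else (X:ℚ[X]) ^ (desL L τ + 1) := by
    intro p c
    rw [desL_ins]
    exact apply_ite (fun k => (X:ℚ[X]) ^ k) _ _ _
  calc (∑ p : Fin (m+1), ∑ c : Fin a, (X:ℚ[X]) ^ desL L (ins τ p c))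
      = ∑ c : Fin a, ∑ p : Fin (m+1),
          (if ((p:ℕ) ∈ DesL L τ ∨ (c ∉ L ∧ (p:ℕ) = m))
            then (X:ℚ[X]) ^ desL L τ else (X:ℚ[X]) ^ (desL L τ + 1)) := by
        rw [Finset.sum_comm]
        exact Finset.sum_congr rfl (fun c _ => Finset.sum_congr rfl (fun p _ => step1 p c))
    _ = ∑ c : Fin a, (if c ∈ L
          then (desL L τ • ((X:ℚ[X]) ^ desL L τ) + (m+1-desL L τ) • (X:ℚ[X]) ^ (desL L τ + 1))
          else ((desL L τ + 1) • ((X:ℚ[X]) ^ desL L τ)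
            + (m-desL L τ) • (X:ℚ[X]) ^ (desL L τ + 1))) :=
        Finset.sum_congr rfl (fun c _ => inner_p_sum L τ c)
    _ = (C ((a:ℚ) - L.card) + C ((a:ℚ) * m + L.card) * X) * X ^ desL L τ
        + C (a:ℚ) * X * (1 - X) * derivative ((X:ℚ[X]) ^ desL L τ) := by
        rw [Finset.sum_ite, Finset.sum_const, Finset.sum_const]
        have hfl : Finset.univ.filter (fun c : Fin a => c ∈ L) = L := by
          ext c; simp
        have hcc := Finset.card_filter_add_card_filter_not
          (s := (Finset.univ : Finset (Fin a))) (p := fun c => c ∈ L)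
        rw [Finset.card_univ, Fintype.card_fin, hfl] at hcc
        have hneg : (Finset.univ.filter (fun c : Fin a => ¬ c ∈ L)).card = a - L.card := by omega
        rw [hfl, hneg]
        exact per_tau (desL L τ) L.card hs hl

end Count

/-- The differential recurrence
`A_{a,ℓ,n}(t) = (a − ℓ + (a(n−1)+ℓ)t) A_{a,ℓ,n-1}(t) + a t(1−t) A'_{a,ℓ,n-1}(t)`
for `n ≥ 1`, where `ℓ = |L|`. -/
theorem Aeul_diff_recurrence (a n : ℕ) [NeZero a] (L : Finset (Fin a)) (hn : 1 ≤ n) :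
    Aeul a n L =
      (Polynomial.C ((a : ℚ) - (L.card : ℚ)) +
          Polynomial.C ((a : ℚ) * ((n : ℚ) - 1) + (L.card : ℚ)) * X) * Aeul a (n - 1) L +
      Polynomial.C (a : ℚ) * X * (1 - X) * Polynomial.derivative (Aeul a (n - 1) L) := by
  obtain ⟨m, rfl⟩ : ∃ m, n = m + 1 := ⟨n - 1, by omega⟩
  have hm : (((m+1 : ℕ) : ℚ)) - 1 = (m : ℚ) := by push_cast; ring
  simp only [Nat.add_sub_cancel, hm]
  simp only [Aeul]
  rw [← Fintype.sum_bijective _ (ins_bijective (a := a) (m := m))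
      (fun x : ColPerm a m × Fin (m+1) × Fin a => (X:ℚ[X]) ^ desL L (ins x.1 x.2.1 x.2.2))
      _ (fun x => rfl),
    Fintype.sum_prod_type, derivative_sum, Finset.mul_sum, Finset.mul_sum,
    ← Finset.sum_add_distrib]
  exact Finset.sum_congr rfl (fun τ _ => sum_ins_tau L τ)
end

section
/- For all integers n ≥ 0, a > 0, 0 ≤ ℓ ≤ a, the C_a ≀ S_n Eulerian polynomial satisfies A_{a,ℓ,n}(t)/(1−t)^{n+1} = Σ_{s≥0} t^s (a(s+1) − ℓ)^n as formal power series in t; equivalently A_{a,ℓ,n}(t) = (1−t)^{n+1} Σ_{s≥0} t^s (a(s+1)−ℓ)^n. -/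
/-!
Inserting the letter `n + 1`, with any of the `a` colors, into any of the `n + 1` gaps of the
window of `σ ∈ C_a ≀ S_n` produces every element of `C_a ≀ S_{n+1}` exactly once. The new letter
is `<_L`-extremal (the smallest if its color lies in `L`, the largest otherwise), so `des_L`
stays the same for the `a des_L(σ) + (a - ℓ)` insertions into a descent or, with a color outside
`L`, at the very end, and grows by one for the other `a (n - des_L(σ)) + ℓ`. Hence
`A_{n+1} = ((a - ℓ) + (a n + ℓ) t) A_n + a t (1 - t) A_n'`. The series
`(1 - t)^{n+1} ∑_s (a (s + 1) - ℓ)^n t^s` satisfies the same recurrence, because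
`∑_s (a (s + 1) - ℓ)^{n+1} t^s = (a - ℓ + a t d/dt) ∑_s (a (s + 1) - ℓ)^n t^s`, and both
sides equal `1` for `n = 0`.
-/

open Finset Polynomial
open scoped Classical

section Descents

variable {α : Type*} [LinearOrder α]

def descCount (w : ℕ → α) (n : ℕ) : ℕ := ∑ i ∈ range n, if w (i + 1) < w i then 1 else 0

lemma descCount_congr {w w' : ℕ → α} {n : ℕ} (h : ∀ i ≤ n, w' i = w i) :
    descCount w' n = descCount w n :=
  sum_congr rfl fun i hi => by
    rw [h i (by simp at hi; omega), h (i + 1) (by simp at hi; omega)]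

lemma descCount_add (w : ℕ → α) (p k : ℕ) :
    descCount w (p + k) = descCount w p + descCount (fun i => w (p + i)) k :=
  sum_range_add _ p k

lemma descCount_succ (w : ℕ → α) (n : ℕ) :
    descCount w (n + 1) = descCount w n + if w (n + 1) < w n then 1 else 0 :=
  sum_range_succ _ n

lemma descCount_succ' (w : ℕ → α) (k : ℕ) :
    descCount w (k + 1) = descCount (fun i => w (i + 1)) k + if w 1 < w 0 then 1 else 0 :=
  sum_range_succ' _ k

/-- Inserting a letter `w' (p + 1)` after position `p` of a word replaces the pair
`(w p, w (p + 1))` by the two pairs `(w p, w' (p + 1))` and `(w' (p + 1), w (p + 1))`. -/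
theorem descCount_insert {w w' : ℕ → α} {p n : ℕ} (hp : p ≤ n)
    (h_le : ∀ i ≤ p, w' i = w i) (h_gt : ∀ i, p < i → w' (i + 1) = w i) :
    descCount w' (n + 1) + (if p < n ∧ w (p + 1) < w p then 1 else 0) =
      descCount w n + (if w' (p + 1) < w p then 1 else 0) +
        if p < n ∧ w (p + 1) < w' (p + 1) then 1 else 0 := by
  obtain ⟨k, rfl⟩ := Nat.exists_eq_add_of_le hp
  have h_head : descCount w' p = descCount w p := descCount_congr h_le
  have h_p : w' p = w p := h_le p le_rfl
  cases k with
  | zero => simp [descCount_succ, h_head, h_p]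
  | succ m =>
    have h_tail : descCount (fun i => w' (p + (i + 1 + 1))) m =
        descCount (fun i => w (p + (i + 1))) m :=
      descCount_congr fun i _ => h_gt (p + (i + 1)) (by omega)
    have h_p2 : w' (p + 2) = w (p + 1) := h_gt (p + 1) (by omega)
    rw [show p + (m + 1) + 1 = p + (m + 1 + 1) by ring, descCount_add w' p,
      descCount_add w p, descCount_succ', descCount_succ', descCount_succ', h_tail, h_head]
    simp only [add_zero, zero_add, h_p, h_p2, Nat.lt_add_of_pos_right m.succ_pos, true_and]
    omega

end Descents

section Insertion

variable {a n : ℕ}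

/-- Insert the letter `n + 1` with color `t` into the window of `σ`, right after position `p`
(so that it lands in position `p + 1`, counting from `1`). -/
def insertMax (σ : ColPerm a n) (t : Fin a) (p : Fin (n + 1)) : ColPerm a (n + 1) :=
  ((finSuccEquiv' p).trans ((Equiv.optionCongr σ.1).trans finSuccEquivLast.symm),
    p.insertNth t σ.2)

@[simp]
lemma insertMax_fst_self (σ : ColPerm a n) (t : Fin a) (p : Fin (n + 1)) :
    (insertMax σ t p).1 p = Fin.last n := by
  simp [insertMax, finSuccEquiv'_at]

@[simp]
lemma insertMax_fst_succAbove (σ : ColPerm a n) (t : Fin a) (p : Fin (n + 1)) (j : Fin n) :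
    (insertMax σ t p).1 (p.succAbove j) = (σ.1 j).castSucc := by
  simp [insertMax, finSuccEquiv'_succAbove, finSuccEquivLast_symm_some]

@[simp]
lemma insertMax_snd_self (σ : ColPerm a n) (t : Fin a) (p : Fin (n + 1)) :
    (insertMax σ t p).2 p = t := by
  simp [insertMax]

@[simp]
lemma insertMax_snd_succAbove (σ : ColPerm a n) (t : Fin a) (p : Fin (n + 1)) (j : Fin n) :
    (insertMax σ t p).2 (p.succAbove j) = σ.2 j := by
  simp [insertMax]

lemma insertMax_injective :
    Function.Injective fun x : ColPerm a n × Fin a × Fin (n + 1) => insertMax x.1 x.2.1 x.2.2 := by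
  rintro ⟨σ, t, p⟩ ⟨σ', t', p'⟩ h
  simp only at h
  obtain rfl : p = p' := (insertMax σ' t' p').1.injective <| by
    rw [insertMax_fst_self, ← h, insertMax_fst_self]
  have h_perm (j) := congrArg (fun τ : ColPerm a (n + 1) => τ.1 (p.succAbove j)) h
  have h_col (i) := congrArg (fun τ : ColPerm a (n + 1) => τ.2 i) h
  simp only [insertMax_fst_succAbove, Fin.castSucc_inj] at h_perm
  obtain rfl : t = t' := by simpa using h_col p
  have h_snd : σ.2 = σ'.2 := funext fun j => by simpa using h_col (p.succAbove j)
  simp [Prod.ext_iff, Equiv.ext h_perm, h_snd]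

lemma insertMax_bijective :
    Function.Bijective fun x : ColPerm a n × Fin a × Fin (n + 1) => insertMax x.1 x.2.1 x.2.2 := by
  refine (Fintype.bijective_iff_injective_and_card _).2 ⟨insertMax_injective, ?_⟩
  simp [Fintype.card_perm, Nat.factorial_succ]
  ring

end Insertion

section Window

variable {a n : ℕ} [NeZero a]

lemma wval_of_notMem_Icc (σ : ColPerm a n) {i : ℕ} (hi : i ∉ Icc 1 n) : wval σ i = (0, 0) := by
  rw [wval, dif_neg (by simpa using hi)]

lemma wval_val_succ (σ : ColPerm a n) (j : Fin n) : wval σ (j + 1) = (σ.2 j, (σ.1 j : ℕ) + 1) := by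
  rw [wval, dif_pos (by omega)]
  simp

lemma wval_snd_le (σ : ColPerm a n) (i : ℕ) : (wval σ i).2 ≤ n := by
  unfold wval
  split
  · exact Fin.is_lt _
  · exact Nat.zero_le n

lemma wval_insertMax_self (σ : ColPerm a n) (t : Fin a) (p : Fin (n + 1)) :
    wval (insertMax σ t p) (p + 1) = (t, n + 1) := by
  simpa using wval_val_succ (insertMax σ t p) p

lemma wval_insertMax_succAbove (σ : ColPerm a n) (t : Fin a) (p : Fin (n + 1)) (j : Fin n) :
    wval (insertMax σ t p) (p.succAbove j + 1) = wval σ (j + 1) := by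
  simp [wval_val_succ]

lemma wval_insertMax_of_le (σ : ColPerm a n) (t : Fin a) (p : Fin (n + 1)) {i : ℕ}
    (hi : i ≤ p) : wval (insertMax σ t p) i = wval σ i := by
  cases i with
  | zero => rw [wval_of_notMem_Icc _ (by simp), wval_of_notMem_Icc _ (by simp)]
  | succ j =>
    have hj : j < n := by omega
    have h := wval_insertMax_succAbove σ t p ⟨j, hj⟩
    rwa [Fin.succAbove_of_castSucc_lt _ _ (by simp [Fin.lt_def]; omega)] at h

lemma wval_insertMax_of_lt (σ : ColPerm a n) (t : Fin a) (p : Fin (n + 1)) {i : ℕ}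
    (hi : p < i) : wval (insertMax σ t p) (i + 1) = wval σ i := by
  rcases lt_or_ge n i with hn | hn
  · rw [wval_of_notMem_Icc _ (by simp; omega), wval_of_notMem_Icc _ (by simp; omega)]
  obtain ⟨j, rfl⟩ : ∃ j, i = j + 1 := ⟨i - 1, by omega⟩
  have h := wval_insertMax_succAbove σ t p ⟨j, by omega⟩
  rwa [Fin.succAbove_of_le_castSucc _ _ (by simp [Fin.le_def]; omega)] at h

end Window

section LDescents

variable {a n : ℕ} (L : Finset (Fin a))

lemma abs_rkL_lt {x : Fin a × ℕ} (hx : x.2 ≤ n) (t : Fin a) :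
    |rkL L x| < ((n : ℤ) + 1) * a + t := by
  have hx1 : (x.1 : ℤ) < a := by exact_mod_cast x.1.is_lt
  have h_low : (a : ℤ) ≤ ((n : ℤ) + 1) * a := by nlinarith
  have h_high : (x.2 : ℤ) * a + x.1 < ((n : ℤ) + 1) * a := by
    nlinarith [show (x.2 : ℤ) ≤ n by exact_mod_cast hx]
  have h_nonneg : 0 ≤ (x.2 : ℤ) * a := by positivity
  unfold rkL
  split_ifs <;> rw [abs_lt] <;> omega

lemma rkL_max (t : Fin a) :
    rkL L (t, n + 1) = if t ∈ L then -(((n : ℤ) + 1) * a + t) else ((n : ℤ) + 1) * a + t := by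
  simp [rkL]

lemma rkL_max_lt_iff {x : Fin a × ℕ} (hx : x.2 ≤ n) (t : Fin a) :
    rkL L (t, n + 1) < rkL L x ↔ t ∈ L := by
  have h := abs_lt.1 (abs_rkL_lt L hx t)
  rw [rkL_max]
  split_ifs with ht <;> simp only [ht, iff_true, iff_false, not_lt] <;> omega

lemma lt_rkL_max_iff {x : Fin a × ℕ} (hx : x.2 ≤ n) (t : Fin a) :
    rkL L x < rkL L (t, n + 1) ↔ t ∉ L := by
  have h := abs_lt.1 (abs_rkL_lt L hx t)
  rw [rkL_max]
  split_ifs with ht <;>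
    simp only [ht, not_true_eq_false, not_false_eq_true, iff_true, iff_false, not_lt] <;> omega

variable [NeZero a]

lemma desL_eq_descCount (σ : ColPerm a n) :
    desL L σ = descCount (fun i => rkL L (wval σ i)) n :=
  card_filter _ _

lemma mem_DesL {σ : ColPerm a n} {i : ℕ} :
    i ∈ DesL L σ ↔ i < n ∧ rkL L (wval σ (i + 1)) < rkL L (wval σ i) := by
  simp [DesL]

theorem desL_insertMax (σ : ColPerm a n) (t : Fin a) (p : Fin (n + 1)) :
    desL L (insertMax σ t p) =
      desL L σ + if (p : ℕ) ∉ DesL L σ ∧ (t ∈ L ∨ (p : ℕ) < n) then 1 else 0 := by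
  have key := descCount_insert (w := fun i => rkL L (wval σ i))
    (w' := fun i => rkL L (wval (insertMax σ t p) i)) (Nat.lt_succ_iff.1 p.is_lt)
    (fun i hi => by simp only [wval_insertMax_of_le σ t p hi])
    (fun i hi => by simp only [wval_insertMax_of_lt σ t p hi])
  simp only [← desL_eq_descCount, ← mem_DesL, wval_insertMax_self,
    rkL_max_lt_iff L (wval_snd_le σ _), lt_rkL_max_iff L (wval_snd_le σ _)] at key
  have h_lt : (p : ℕ) ∈ DesL L σ → (p : ℕ) < n := fun h => ((mem_DesL L).1 h).1
  split_ifs at key ⊢ <;> first | omega | tauto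

end LDescents

section Counting

variable {a n : ℕ} [NeZero a] (L : Finset (Fin a))

lemma card_range_filter_notMem_DesL (σ : ColPerm a n) :
    #{i ∈ range n | i ∉ DesL L σ} + desL L σ = n := by
  have h : {i ∈ range n | i ∈ DesL L σ} = DesL L σ := by
    rw [filter_mem_eq_inter, inter_eq_right]
    exact filter_subset _ _
  have := card_filter_add_card_filter_not (s := range n) (· ∈ DesL L σ)
  rw [h, card_range] at this
  rw [desL]
  omega

lemma card_insertMax_ascent (σ : ColPerm a n) :
    #{y : Fin a × Fin (n + 1) | (y.2 : ℕ) ∉ DesL L σ ∧ (y.1 ∈ L ∨ (y.2 : ℕ) < n)} +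
      a * desL L σ = a * n + #L := by
  have h_last : n ∉ DesL L σ := fun h => (((mem_DesL L).1 h).1).false
  have h_inner (t : Fin a) :
      (∑ p : Fin (n + 1), if (p : ℕ) ∉ DesL L σ ∧ (t ∈ L ∨ (p : ℕ) < n) then 1 else 0) =
        #{i ∈ range n | i ∉ DesL L σ} + if t ∈ L then 1 else 0 := by
    rw [Fin.sum_univ_eq_sum_range (fun i => if i ∉ DesL L σ ∧ (t ∈ L ∨ i < n) then 1 else 0),
      sum_range_succ, card_filter]
    congr 1
    · refine sum_congr rfl fun i hi => ?_
      simp [mem_range.1 hi]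
    · simp [h_last]
  rw [card_filter, Fintype.sum_prod_type, sum_congr rfl fun t _ => h_inner t, sum_add_distrib,
    sum_const, card_univ, Fintype.card_fin, smul_eq_mul, sum_boole, Nat.cast_id,
    filter_univ_mem]
  linear_combination a * card_range_filter_notMem_DesL L σ

end Counting

section Series

open scoped PowerSeries
open PowerSeries renaming X → T

noncomputable def eulerStep (a ℓ n : ℕ) : ℚ⟦X⟧ →ₗ[ℚ] ℚ⟦X⟧ :=
  LinearMap.mulLeft ℚ ((a - ℓ : ℚ⟦X⟧) + (a * n + ℓ : ℚ⟦X⟧) * T) +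
    LinearMap.mulLeft ℚ ((a : ℚ⟦X⟧) * T * (1 - T)) ∘ₗ (d⁄dX ℚ).toLinearMap

lemma eulerStep_apply (a ℓ n : ℕ) (F : ℚ⟦X⟧) :
    eulerStep a ℓ n F =
      ((a - ℓ : ℚ⟦X⟧) + (a * n + ℓ : ℚ⟦X⟧) * T) * F + (a : ℚ⟦X⟧) * T * (1 - T) * d⁄dX ℚ F :=
  rfl

lemma eulerStep_T_pow (a ℓ n d : ℕ) :
    eulerStep a ℓ n (T ^ d) =
      T ^ d * ((a * (n + 1) : ℚ⟦X⟧) + (a * n + ℓ - a * d : ℚ⟦X⟧) * (T - 1)) := by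
  rw [eulerStep_apply, Derivation.leibniz_pow, PowerSeries.derivative_X, smul_eq_mul, nsmul_eq_mul]
  rcases d with _ | d
  · simp only [pow_zero, Nat.cast_zero, zero_mul, mul_zero, add_zero, sub_zero]
    ring
  · simp only [Nat.add_sub_cancel, pow_succ]
    push_cast
    ring

noncomputable def eulerianQuotient (a ℓ n : ℕ) : ℚ⟦X⟧ :=
  PowerSeries.mk fun s => ((a : ℚ) * (s + 1) - ℓ) ^ n

lemma one_sub_T_mul_eulerianQuotient_zero (a ℓ : ℕ) : (1 - T) * eulerianQuotient a ℓ 0 = 1 := by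
  rw [mul_comm, eulerianQuotient]
  simp only [pow_zero]
  exact PowerSeries.mk_one_mul_one_sub_eq_one ℚ

lemma eulerianQuotient_succ (a ℓ n : ℕ) :
    eulerianQuotient a ℓ (n + 1) =
      (a - ℓ : ℚ⟦X⟧) * eulerianQuotient a ℓ n +
        (a : ℚ⟦X⟧) * T * d⁄dX ℚ (eulerianQuotient a ℓ n) := by
  ext s
  simp only [← map_natCast (PowerSeries.C (R := ℚ)), ← map_sub, mul_assoc, map_add,
    PowerSeries.coeff_C_mul]
  rcases s with _ | s
  · simp only [eulerianQuotient, pow_succ, PowerSeries.coeff_mk, PowerSeries.coeff_zero_X_mul,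
      Nat.cast_zero]
    ring
  · simp only [eulerianQuotient, pow_succ, PowerSeries.coeff_mk, PowerSeries.coeff_succ_X_mul,
      PowerSeries.coeff_derivative]
    push_cast
    ring

lemma eulerStep_one_sub_T_pow_mul_eulerianQuotient (a ℓ n : ℕ) :
    eulerStep a ℓ n ((1 - T) ^ (n + 1) * eulerianQuotient a ℓ n) =
      (1 - T) ^ (n + 2) * eulerianQuotient a ℓ (n + 1) := by
  rw [eulerStep_apply, Derivation.leibniz, Derivation.leibniz_pow, eulerianQuotient_succ]
  simp only [map_sub, Derivation.map_one_eq_zero, PowerSeries.derivative_X, smul_eq_mul,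
    nsmul_eq_mul]
  push_cast
  ring

variable {a : ℕ} [NeZero a] (L : Finset (Fin a))

lemma sum_T_pow_desL_insertMax {n : ℕ} (σ : ColPerm a n) :
    ∑ y : Fin a × Fin (n + 1), T ^ desL L (insertMax σ y.1 y.2) =
      eulerStep a #L n (T ^ desL L σ) := by
  have h_pow (c : Prop) [Decidable c] :
      (T : ℚ⟦X⟧) ^ (if c then 1 else 0) = 1 + (if c then 1 else 0 : ℚ⟦X⟧) * (T - 1) := by
    split_ifs <;> simp
  have h_card : (#{y : Fin a × Fin (n + 1) | (y.2 : ℕ) ∉ DesL L σ ∧ (y.1 ∈ L ∨ (y.2 : ℕ) < n)} :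
      ℚ⟦X⟧) + a * desL L σ = a * n + #L := by
    simpa using congrArg (Nat.cast : ℕ → ℚ⟦X⟧) (card_insertMax_ascent L σ)
  simp only [desL_insertMax, pow_add, h_pow, ← mul_sum, sum_add_distrib, ← sum_mul, sum_boole]
  rw [eulerStep_T_pow]
  congr 1
  simp only [sum_const, card_univ, Fintype.card_prod, Fintype.card_fin, nsmul_eq_mul]
  push_cast
  linear_combination (T - 1) * h_card

lemma coe_Aeul (n : ℕ) : (Aeul a n L : ℚ⟦X⟧) = ∑ σ : ColPerm a n, T ^ desL L σ := by
  rw [Aeul, ← Polynomial.coeToPowerSeries.ringHom_apply, map_sum]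
  simp only [map_pow, Polynomial.coeToPowerSeries.ringHom_apply, Polynomial.coe_X]

lemma coe_Aeul_zero : (Aeul a 0 L : ℚ⟦X⟧) = 1 := by
  simp [coe_Aeul, desL, DesL]

lemma coe_Aeul_succ (n : ℕ) : (Aeul a (n + 1) L : ℚ⟦X⟧) = eulerStep a #L n (Aeul a n L) := by
  rw [coe_Aeul, coe_Aeul, map_sum,
    ← Fintype.sum_bijective _ insertMax_bijective _ _ fun _ => rfl, Fintype.sum_prod_type]
  exact sum_congr rfl fun σ _ => sum_T_pow_desL_insertMax L σ

end Series

/-- The Eulerian quotient formula: for all `n ≥ 0`,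
`A_{a,ℓ,n}(t) = (1−t)^{n+1} Σ_{s≥0} t^s (a(s+1) − ℓ)^n` as formal power series in `t`
(equivalently, `A_{a,ℓ,n}(t)/(1−t)^{n+1} = Σ_{s≥0} t^s (a(s+1) − ℓ)^n`). -/
theorem Aeul_quotient_formula (a n : ℕ) [NeZero a] (L : Finset (Fin a)) :
    (Aeul a n L : PowerSeries ℚ) =
      (1 - PowerSeries.X) ^ (n + 1) *
        PowerSeries.mk (fun s => ((a : ℚ) * (s + 1) - (L.card : ℚ)) ^ n) := by
  change _ = _ * eulerianQuotient a #L n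
  induction n with
  | zero => rw [coe_Aeul_zero, pow_one, one_sub_T_mul_eulerianQuotient_zero]
  | succ n ih => rw [coe_Aeul_succ, ih, eulerStep_one_sub_T_pow_mul_eulerianQuotient]
end

section
/- Closed form for the exponential generating function of the C_a ≀ S_n Eulerian polynomials: Σ_{n≥0} (u^n/n!)·A_{a,ℓ,n}(t) = (1−t)/(−t e^{ℓ(1−t)u} + e^{(a−ℓ)u(t−1)}). -/
open Finset Polynomial
open scoped Classical

/-!
A word of length `n` over the `a (s + 1) - ℓ` letters `(c, j)` (a color `c` and a level `j ≤ s`,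
the level positive when `c ∈ L`) attaches a letter to each value `1, …, n`. Sorting the values by
`(level, L-rank)` turns it into a colored permutation `σ` together with levels that increase
weakly along the window of `σ` and strictly at its `L`-descents (with `σ(0) = 0` at level `0`).
Subtracting the number of earlier descents and adding the position makes these level sequences
strictly increasing, so there are `C(s - des_L σ + n, n)` of them. Summing over `s` gives the
Carlitz identity `Σ_s (a (s + 1) - ℓ)ⁿ tˢ = A_{a,ℓ,n}(t) / (1 - t)ⁿ⁺¹`. Hence after the
substitution `u ↦ (1 - t) u` the generating function becomes `Σ_s tˢ e^{(a (s + 1) - ℓ) u}`, and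
multiplying it by `e^{(ℓ - a) u} - t e^{ℓ u}` telescopes to `1`.
-/

namespace WreathEulerian

section Rank

variable {a : ℕ} (L : Finset (Fin a))

theorem rkL_zero (c : Fin a) : rkL L (c, 0) = 0 := by simp [rkL]

theorem natAbs_rkL {c : Fin a} {j : ℕ} (hj : j ≠ 0) : (rkL L (c, j)).natAbs = j * a + c := by
  by_cases hc : c ∈ L <;> simp [rkL, hj, hc] <;> omega

theorem rkL_neg_iff {c : Fin a} {j : ℕ} (hj : j ≠ 0) : rkL L (c, j) < 0 ↔ c ∈ L := by
  have : 0 < (j : ℤ) * a := by have := c.pos; positivity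
  by_cases hc : c ∈ L <;> simp [rkL, hj, hc] <;> omega

theorem rkL_ne_zero {c : Fin a} {j : ℕ} (hj : j ≠ 0) : rkL L (c, j) ≠ 0 := by
  have : 0 < (j : ℤ) * a := by have := c.pos; positivity
  by_cases hc : c ∈ L <;> simp [rkL, hj, hc] <;> omega

theorem eq_of_rkL_eq {c c' : Fin a} {j j' : ℕ} (hj : j ≠ 0) (hj' : j' ≠ 0)
    (h : rkL L (c, j) = rkL L (c', j')) : j = j' := by
  have hsum := natAbs_rkL L hj ▸ natAbs_rkL L hj' ▸ congrArg Int.natAbs h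
  have := congrArg (· / a) hsum
  simp only [add_comm (_ * a), Nat.add_mul_div_right _ _ c.pos, Nat.div_eq_of_lt c.isLt,
    Nat.div_eq_of_lt c'.isLt, zero_add] at this
  exact this

end Rank

section Window

variable {a n : ℕ} (L : Finset (Fin a)) (σ : ColPerm a n)

/-- The rank of the letter in window position `i + 1`. -/
def rank (i : Fin n) : ℤ := rkL L (σ.2 i, σ.1 i + 1)

/-- The ranks of the letters `σ(0) = 0, σ(1), …, σ(n)`. -/
def posRank : Fin (n + 1) → ℤ := Fin.cons 0 (rank L σ)

theorem rank_injective : Function.Injective (rank L σ) := fun i i' h =>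
  σ.1.injective (Fin.ext (by have := eq_of_rkL_eq L (by omega) (by omega) h; omega))

theorem posRank_injective : Function.Injective (posRank L σ) :=
  Fin.cons_injective_iff.2
    ⟨fun ⟨_, hi⟩ => rkL_ne_zero L (Nat.succ_ne_zero _) hi, rank_injective L σ⟩

variable [NeZero a]

theorem posRank_eq (k : Fin (n + 1)) : posRank L σ k = rkL L (wval σ k) := by
  cases k using Fin.cases with
  | zero => simp [posRank, wval, rkL_zero]
  | succ i => simp [posRank, rank, wval]

theorem mem_DesL_iff (i : Fin n) :
    (i : ℕ) ∈ DesL L σ ↔ posRank L σ i.succ < posRank L σ i.castSucc := by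
  simp [DesL, posRank_eq]

end Window

section LevelWord

variable {a n : ℕ} (L : Finset (Fin a)) (σ : ColPerm a n)

/-- The sorting key `(level, rank)` of the letters `σ(0) = 0, σ(1), …, σ(n)`, where the letter
`0` sits at level `0` and the letter `σ(i + 1)` at level `g i`. -/
def levelKey (g : Fin n → ℕ) (k : Fin (n + 1)) : ℕ ×ₗ ℤ :=
  toLex ((Fin.cons 0 g : Fin (n + 1) → ℕ) k, posRank L σ k)

def IsLevelWord (g : Fin n → ℕ) : Prop := StrictMono (levelKey L σ g)

theorem isLevelWord_iff (g : Fin n → ℕ) :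
    IsLevelWord L σ g ↔ (∀ i, toLex (0, 0) < toLex (g i, rank L σ i)) ∧
      StrictMono fun i => toLex (g i, rank L σ i) := by
  have : levelKey L σ g = Fin.cons (toLex (0, 0)) fun i => toLex (g i, rank L σ i) := by
    ext k; cases k using Fin.cases <;> rfl
  rw [IsLevelWord, this, Fin.strictMono_cons]

theorem IsLevelWord.ne_zero {g : Fin n → ℕ} (hg : IsLevelWord L σ g) {i : Fin n}
    (hi : σ.2 i ∈ L) : g i ≠ 0 := by
  have h := ((isLevelWord_iff L σ g).1 hg).1 i
  have hneg : rank L σ i < 0 := (rkL_neg_iff L (Nat.succ_ne_zero _)).2 hi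
  rw [Prod.Lex.toLex_lt_toLex] at h
  omega

end LevelWord

section Sorting

variable {a n s : ℕ} (L : Finset (Fin a))

/-- Letters `(c, j)` of color `c` and level `j ≤ s`. -/
abbrev Letter (s : ℕ) := {x : Fin a × Fin (s + 1) // x.1 ∈ L → x.2 ≠ 0}

theorem card_letter : Nat.card (Letter L s) = a * (s + 1) - #L := by
  have hL : #(L ×ˢ {(0 : Fin (s + 1))}) = #L := by simp
  have hU : #(univ : Finset (Fin a × Fin (s + 1))) = a * (s + 1) := by simp
  rw [Nat.card_eq_fintype_card, Fintype.card_subtype, ← hL, ← hU,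
    ← Finset.card_sdiff_of_subset (subset_univ _)]
  congr 1
  ext ⟨c, j⟩
  simp [not_and, eq_comm]

/-- In a word `f`, the value `v + 1` carries the letter `f v`. -/
def key (f : Fin n → Letter L s) (v : Fin n) : ℕ ×ₗ ℤ :=
  toLex (((f v).1.2 : ℕ), rkL L ((f v).1.1, v + 1))

theorem key_injective (f : Fin n → Letter L s) : Function.Injective (key L f) := fun v v' h =>
  Fin.ext (by
    have := eq_of_rkL_eq L (Nat.succ_ne_zero _) (Nat.succ_ne_zero _)
      (congrArg (fun x => (ofLex x).2) h)
    omega)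

theorem zero_lt_key (f : Fin n → Letter L s) (v : Fin n) : toLex (0, 0) < key L f v := by
  rw [key, Prod.Lex.toLex_lt_toLex]
  by_cases hc : (f v).1.1 ∈ L
  · exact Or.inl (Nat.pos_of_ne_zero (Fin.val_ne_iff.2 ((f v).2 hc)))
  · have hpos := (rkL_neg_iff L (Nat.add_one_ne_zero (v : ℕ))).not.2 hc
    have hne := rkL_ne_zero L (c := (f v).1.1) (Nat.add_one_ne_zero (v : ℕ))
    omega

def toColPerm (f : Fin n → Letter L s) : ColPerm a n :=
  (Tuple.sort (key L f), fun i => (f (Tuple.sort (key L f) i)).1.1)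

def levelWord (f : Fin n → Letter L s) (i : Fin n) : Fin (s + 1) :=
  (f (Tuple.sort (key L f) i)).1.2

theorem isLevelWord_levelWord (f : Fin n → Letter L s) :
    IsLevelWord L (toColPerm L f) fun i => levelWord L f i :=
  (isLevelWord_iff _ _ _).2 ⟨fun _ => zero_lt_key L f _,
    (Tuple.monotone_sort _).strictMono_of_injective
      ((key_injective L f).comp (Tuple.sort _).injective)⟩

def ofLevelWord (σ : ColPerm a n) (g : Fin n → Fin (s + 1))
    (hg : IsLevelWord L σ fun i => g i) : Fin n → Letter L s := fun v =>
  ⟨(σ.2 (σ.1.symm v), g (σ.1.symm v)), fun hc h0 =>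
    hg.ne_zero L σ hc (by simpa using congrArg Fin.val h0)⟩

section OfLevelWord

variable (σ : ColPerm a n) (g : Fin n → Fin (s + 1)) (hg : IsLevelWord L σ fun i => g i)

theorem key_ofLevelWord (i : Fin n) :
    key L (ofLevelWord L σ g hg) (σ.1 i) = toLex ((g i : ℕ), rank L σ i) := by
  simp [key, ofLevelWord, rank]

theorem sort_key_ofLevelWord : Tuple.sort (key L (ofLevelWord L σ g hg)) = σ.1 := by
  have hmono : StrictMono (key L (ofLevelWord L σ g hg) ∘ σ.1) := by
    simpa [Function.comp_def, key_ofLevelWord] using ((isLevelWord_iff L σ _).1 hg).2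
  exact (Tuple.eq_sort_iff.2 ⟨hmono.monotone, fun i j hij h => absurd h (hmono hij).ne⟩).symm

theorem toColPerm_ofLevelWord : toColPerm L (ofLevelWord L σ g hg) = σ :=
  Prod.ext (sort_key_ofLevelWord L σ g hg)
    (funext fun i => by simp [toColPerm, sort_key_ofLevelWord, ofLevelWord])

theorem levelWord_ofLevelWord : levelWord L (ofLevelWord L σ g hg) = g :=
  funext fun i => by simp [levelWord, sort_key_ofLevelWord, ofLevelWord]

end OfLevelWord

theorem ofLevelWord_levelWord (f : Fin n → Letter L s) :
    ofLevelWord L (toColPerm L f) (levelWord L f) (isLevelWord_levelWord L f) = f :=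
  funext fun v => Subtype.ext (by simp [ofLevelWord, toColPerm, levelWord])

def wordEquiv : (Fin n → Letter L s) ≃
    Σ σ : ColPerm a n, {g : Fin n → Fin (s + 1) // IsLevelWord L σ fun i => g i} where
  toFun f := ⟨toColPerm L f, levelWord L f, isLevelWord_levelWord L f⟩
  invFun p := ofLevelWord L p.1 p.2.1 p.2.2
  left_inv := ofLevelWord_levelWord L
  right_inv p := Sigma.subtype_ext (toColPerm_ofLevelWord L _ _ p.2.2)
    (levelWord_ofLevelWord L _ _ p.2.2)

theorem pow_eq_sum_card_isLevelWord :
    (a * (s + 1) - #L) ^ n =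
      ∑ σ : ColPerm a n, Nat.card {g : Fin n → Fin (s + 1) // IsLevelWord L σ fun i => g i} := by
  rw [← card_letter, ← Nat.card_fin n, ← Nat.card_fun, Nat.card_congr (wordEquiv L),
    Nat.card_sigma, Nat.card_fin]

end Sorting

section Counting

theorem add_sub_le_of_strictMono {m : ℕ} {E : Fin m → ℕ} (hE : StrictMono E) {i j : Fin m}
    (hij : i ≤ j) : E i + (j - i) ≤ E j := by
  induction h : (j : ℕ) - i generalizing j with
  | zero => simpa using hE.monotone hij
  | succ d ih =>
    have hj : ((j : ℕ) - 1) < m := by omega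
    have h1 := ih (j := ⟨j - 1, hj⟩) (Fin.le_def.2 (by simp; omega)) (by simp; omega)
    have h2 := hE (show (⟨j - 1, hj⟩ : Fin m) < j from Fin.lt_def.2 (by simp; omega))
    omega

/-- Sequences `0 = E 0 < E 1 < ⋯ < E n ≤ M` are the `n`-subsets of `{1, …, M}`. -/
theorem card_strictMono_zero (n M : ℕ) :
    Nat.card {E : Fin (n + 1) → ℕ // StrictMono E ∧ E 0 = 0 ∧ ∀ k, E k ≤ M} = M.choose n := by
  let e : {E : Fin (n + 1) → ℕ // StrictMono E ∧ E 0 = 0 ∧ ∀ k, E k ≤ M} ≃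
      (Fin n ↪o Finset.Ioc 0 M) :=
    { toFun E := OrderEmbedding.ofStrictMono
        (fun k => ⟨E.1 k.succ,
          mem_Ioc.2 ⟨lt_of_eq_of_lt E.2.2.1.symm (E.2.1 k.succ_pos), E.2.2.2 _⟩⟩)
        fun _ _ h => E.2.1 (Fin.succ_lt_succ_iff.2 h)
      invFun e := ⟨Fin.cons 0 fun k => (e k : ℕ),
        Fin.strictMono_cons.2 ⟨fun k => (mem_Ioc.1 (e k).2).1, fun _ _ h => e.strictMono h⟩,
        rfl, fun k => Fin.cases (Nat.zero_le _) (fun k => (mem_Ioc.1 (e k).2).2) k⟩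
      left_inv E := Subtype.ext (funext fun k => Fin.cases E.2.2.1.symm (fun _ => rfl) k)
      right_inv e := by ext; simp }
  rw [Nat.card_congr e, Nat.card_congr Set.powersetCard.ofFinEmbEquiv, Set.powersetCard.card,
    Nat.card_eq_fintype_card, Fintype.card_coe, Nat.card_Ioc, Nat.sub_zero]

end Counting

section Shift

variable (D : Finset ℕ) {n : ℕ}

def countBelow (k : ℕ) : ℕ := ∑ i ∈ range k, if i ∈ D then 1 else 0

theorem countBelow_succ (k : ℕ) :
    countBelow D (k + 1) = countBelow D k + if k ∈ D then 1 else 0 :=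
  sum_range_succ _ _

theorem countBelow_le (k : ℕ) : countBelow D k ≤ k := by
  refine (sum_le_card_nsmul (range k) _ 1 fun i _ => ?_).trans_eq (by simp)
  split_ifs <;> simp

theorem countBelow_mono {k l : ℕ} (hkl : k ≤ l) : countBelow D k ≤ countBelow D l :=
  sum_le_sum_of_subset (range_subset_range.2 hkl)

theorem countBelow_eq_card (hD : D ⊆ range n) : countBelow D n = #D := by
  rw [countBelow, sum_boole, Nat.cast_id, filter_mem_eq_inter, inter_eq_right.2 hD]

/-- The levels `0, g 0, …, g (n - 1)` at positions `0, …, n`, raised by the position and lowered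
by the number of elements of `D` below it: this is strictly increasing iff the levels ascend
weakly, and strictly at the positions in `D` (`shiftLevels_lt_iff`). -/
def shiftLevels (g : Fin n → ℕ) (k : Fin (n + 1)) : ℕ :=
  (Fin.cons 0 g : Fin (n + 1) → ℕ) k + k - countBelow D k

def unshiftLevels (E : Fin (n + 1) → ℕ) (i : Fin n) : ℕ :=
  E i.succ + countBelow D (i + 1) - (i + 1)

theorem shiftLevels_lt_iff (g : Fin n → ℕ) (i : Fin n) :
    shiftLevels D g i.castSucc < shiftLevels D g i.succ ↔
      (Fin.cons 0 g : Fin (n + 1) → ℕ) i.castSucc + (if (i : ℕ) ∈ D then 1 else 0) ≤ g i := by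
  have := countBelow_le D i
  simp only [shiftLevels, Fin.val_castSucc, Fin.val_succ, Fin.cons_succ, countBelow_succ]
  split_ifs <;> omega

theorem shiftLevels_zero (g : Fin n → ℕ) : shiftLevels D g 0 = 0 := by
  simp [shiftLevels, countBelow]

theorem shiftLevels_le {s : ℕ} (hD : D ⊆ range n) {g : Fin n → Fin (s + 1)}
    (hg : StrictMono (shiftLevels D fun i => g i)) (k : Fin (n + 1)) :
    shiftLevels D (fun i => g i) k ≤ s + n - #D := by
  have hlast := hg.monotone (Fin.le_last k)
  have hg_last : (Fin.cons 0 (fun i => (g i : ℕ)) : Fin (n + 1) → ℕ) (Fin.last n) ≤ s :=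
    Fin.cases (Nat.zero_le _) (fun i => Nat.lt_succ_iff.1 (g i).2) (Fin.last n)
  have := countBelow_eq_card D hD
  simp only [shiftLevels, Fin.val_last] at hlast hg_last ⊢
  omega

theorem unshiftLevels_shiftLevels (g : Fin n → ℕ) : unshiftLevels D (shiftLevels D g) = g := by
  funext i
  have := countBelow_le D (i + 1)
  simp only [unshiftLevels, shiftLevels, Fin.cons_succ, Fin.val_succ]
  omega

theorem shiftLevels_unshiftLevels {E : Fin (n + 1) → ℕ} (hE : StrictMono E) (h0 : E 0 = 0) :
    shiftLevels D (unshiftLevels D E) = E := by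
  funext k
  cases k using Fin.cases with
  | zero => rw [shiftLevels_zero, h0]
  | succ i =>
    have := add_sub_le_of_strictMono hE (Fin.zero_le i.succ)
    simp only [shiftLevels, unshiftLevels, Fin.cons_succ, Fin.val_succ, h0,
      Fin.val_zero] at this ⊢
    omega

theorem unshiftLevels_lt {s : ℕ} (hD : D ⊆ range n) {E : Fin (n + 1) → ℕ} (hE : StrictMono E)
    (h0 : E 0 = 0) (hEs : ∀ k, E k ≤ s + n - #D) (i : Fin n) :
    unshiftLevels D E i < s + 1 := by
  have h1 := add_sub_le_of_strictMono hE (Fin.zero_le i.succ)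
  have h2 := add_sub_le_of_strictMono hE (Fin.le_last i.succ)
  have := hEs (Fin.last n)
  have := countBelow_mono D (by omega : (i : ℕ) + 1 ≤ n)
  have := countBelow_eq_card D hD
  simp only [unshiftLevels, h0, Fin.val_zero, Fin.val_succ, Fin.val_last] at h1 h2 ⊢
  omega

def shiftLevelsEquiv (hD : D ⊆ range n) (s : ℕ) :
    {g : Fin n → Fin (s + 1) // StrictMono (shiftLevels D fun i => g i)} ≃
      {E : Fin (n + 1) → ℕ // StrictMono E ∧ E 0 = 0 ∧ ∀ k, E k ≤ s + n - #D} where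
  toFun g := ⟨shiftLevels D fun i => g.1 i, g.2, shiftLevels_zero D _, shiftLevels_le D hD g.2⟩
  invFun E := ⟨fun i => ⟨unshiftLevels D E.1 i,
      unshiftLevels_lt D hD E.2.1 E.2.2.1 E.2.2.2 i⟩,
    by simpa only [shiftLevels_unshiftLevels D E.2.1 E.2.2.1] using E.2.1⟩
  left_inv g := Subtype.ext (funext fun i => Fin.ext (congrFun (unshiftLevels_shiftLevels D _) i))
  right_inv E := Subtype.ext (shiftLevels_unshiftLevels D E.2.1 E.2.2.1)

theorem card_strictMono_shiftLevels (hD : D ⊆ range n) (s : ℕ) :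
    Nat.card {g : Fin n → Fin (s + 1) // StrictMono (shiftLevels D fun i => g i)} =
      (s + n - #D).choose n := by
  rw [Nat.card_congr (shiftLevelsEquiv D hD s), card_strictMono_zero]

end Shift

section Descents

variable {a n : ℕ} [NeZero a] (L : Finset (Fin a)) (σ : ColPerm a n)

theorem levelKey_lt_iff (g : Fin n → ℕ) (i : Fin n) :
    levelKey L σ g i.castSucc < levelKey L σ g i.succ ↔
      (Fin.cons 0 g : Fin (n + 1) → ℕ) i.castSucc + (if (i : ℕ) ∈ DesL L σ then 1 else 0) ≤
        g i := by
  have hne := (posRank_injective L σ).ne (Fin.castSucc_lt_succ (i := i)).ne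
  simp only [levelKey, Prod.Lex.toLex_lt_toLex, Fin.cons_succ, mem_DesL_iff]
  split_ifs <;> omega

theorem isLevelWord_iff_strictMono_shiftLevels (g : Fin n → ℕ) :
    IsLevelWord L σ g ↔ StrictMono (shiftLevels (DesL L σ) g) := by
  simp only [IsLevelWord, Fin.strictMono_iff_lt_succ, levelKey_lt_iff, shiftLevels_lt_iff]

theorem card_isLevelWord (s : ℕ) :
    Nat.card {g : Fin n → Fin (s + 1) // IsLevelWord L σ fun i => g i} =
      (s + n - desL L σ).choose n := by
  simp only [isLevelWord_iff_strictMono_shiftLevels]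
  exact card_strictMono_shiftLevels _ (filter_subset _ _) s

end Descents

section Carlitz

open PowerSeries

variable {a : ℕ} [NeZero a] (L : Finset (Fin a)) (n : ℕ)

theorem desL_le (σ : ColPerm a n) : desL L σ ≤ n :=
  (card_le_card (filter_subset _ _)).trans (card_range n).le

theorem coe_Aeul :
    (Aeul a n L : PowerSeries ℚ) = ∑ σ : ColPerm a n, PowerSeries.X ^ desL L σ := by
  rw [Aeul, ← Polynomial.coeToPowerSeries.ringHom_apply, map_sum]
  simp

theorem mk_choose_sub_eq {d : ℕ} (hd : d ≤ n) :
    PowerSeries.mk (fun s => ((s + n - d).choose n : ℚ)) =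
      PowerSeries.X ^ d * PowerSeries.mk fun m => ((n + m).choose n : ℚ) := by
  ext s
  rw [coeff_mk, PowerSeries.coeff_X_pow_mul', coeff_mk]
  split_ifs with h
  · congr 2; omega
  · rw [Nat.choose_eq_zero_of_lt (by omega), Nat.cast_zero]

theorem coe_Aeul_eq :
    (Aeul a n L : PowerSeries ℚ) =
      (1 - PowerSeries.X) ^ (n + 1) * PowerSeries.mk fun s => ((a : ℚ) * (s + 1) - #L) ^ n := by
  have hL (s : ℕ) : #L ≤ a * (s + 1) :=
    (card_le_univ L).trans (by simpa using Nat.le_mul_of_pos_right a s.succ_pos)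
  have hmk : (PowerSeries.mk fun s => ((a : ℚ) * (s + 1) - #L) ^ n) =
      ∑ σ : ColPerm a n,
        PowerSeries.X ^ desL L σ * PowerSeries.mk fun m => ((n + m).choose n : ℚ) := by
    ext s
    simp only [coeff_mk, map_sum, ← mk_choose_sub_eq n (desL_le L n _), ← card_isLevelWord]
    rw [← Nat.cast_sum, ← pow_eq_sum_card_isLevelWord]
    push_cast [hL s]
    ring
  rw [hmk, mul_sum, coe_Aeul]
  refine sum_congr rfl fun σ _ => ?_
  rw [mul_left_comm, mul_comm _ (PowerSeries.mk _), mk_add_choose_mul_one_sub_pow_eq_one, mul_one]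

end Carlitz

section ExpSeries

open PowerSeries

/-- `Σ_s e^{c_s u} tˢ`, a power series in `u` over `ℚ⟦t⟧`. -/
noncomputable def expSeries (c : ℕ → ℚ) : PowerSeries (PowerSeries ℚ) :=
  PowerSeries.mk fun n => (n.factorial : ℚ)⁻¹ • PowerSeries.mk fun s => c s ^ n

theorem expSeries_mul_rescale_exp (c : ℕ → ℚ) (y : ℚ) :
    expSeries c * rescale (PowerSeries.C y) (exp (PowerSeries ℚ)) =
      expSeries fun s => c s + y := by
  have hexp (j : ℕ) : PowerSeries.coeff j (rescale (PowerSeries.C y) (exp (PowerSeries ℚ))) =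
      PowerSeries.C (y ^ j / j.factorial) := by
    simp [coeff_rescale, coeff_exp, div_eq_mul_inv]
  ext n s
  have h := congrArg (PowerSeries.coeff n) (exp_mul_exp_eq_exp_add (A := ℚ) (c s) y)
  simp only [PowerSeries.coeff_mul, coeff_rescale, coeff_exp] at h
  rw [PowerSeries.coeff_mul, map_sum]
  simp only [hexp, PowerSeries.coeff_mul_C, expSeries, coeff_mk, PowerSeries.coeff_smul,
    smul_eq_mul]
  simpa [div_eq_mul_inv, mul_assoc, mul_left_comm, mul_comm] using h

theorem expSeries_sub_C_X_mul (c : ℕ → ℚ) (h0 : c 0 = 0) :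
    expSeries c - PowerSeries.C PowerSeries.X * expSeries (fun s => c (s + 1)) = 1 := by
  ext n s
  rcases s with _ | s
  · rcases n with _ | n <;> simp [expSeries, PowerSeries.coeff_one, h0]
  · simp [expSeries, PowerSeries.coeff_one, apply_ite (PowerSeries.coeff (s + 1))]

/-- `Σ_s tˢ e^{(y(s+1) - x)u} = e^{(y - x)u} / (1 - t e^{yu})`. -/
theorem expSeries_mul_eq_one (x y : ℚ) :
    (expSeries fun s => y * (s + 1) - x) *
      (rescale (PowerSeries.C (x - y)) (exp (PowerSeries ℚ)) -
        PowerSeries.C PowerSeries.X * rescale (PowerSeries.C x) (exp (PowerSeries ℚ))) = 1 := by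
  have h1 : (fun s : ℕ => y * (s + 1) - x + (x - y)) = fun s : ℕ => y * s := by
    funext s; ring
  have h2 : (fun s : ℕ => y * (s + 1) - x + x) = fun s : ℕ => y * ((s + 1 : ℕ) : ℚ) := by
    funext s; push_cast; ring
  rw [mul_sub, mul_left_comm, expSeries_mul_rescale_exp, expSeries_mul_rescale_exp, h1, h2,
    expSeries_sub_C_X_mul _ (by simp)]

theorem neg_C_X_mul_rescale_exp_add_rescale_exp (x y : ℚ) :
    -PowerSeries.C PowerSeries.X *
        rescale (PowerSeries.C x * (1 - PowerSeries.X)) (exp (PowerSeries ℚ)) +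
      rescale ((PowerSeries.C y - PowerSeries.C x) * (PowerSeries.X - 1))
        (exp (PowerSeries ℚ)) =
      rescale (1 - PowerSeries.X)
        (rescale (PowerSeries.C (x - y)) (exp (PowerSeries ℚ)) -
          PowerSeries.C PowerSeries.X * rescale (PowerSeries.C x) (exp (PowerSeries ℚ))) := by
  have hX : rescale (1 - PowerSeries.X) (PowerSeries.C (PowerSeries.X : PowerSeries ℚ)) =
      PowerSeries.C PowerSeries.X := by
    ext n : 1
    rcases n with _ | n <;> simp [coeff_rescale, PowerSeries.coeff_C]
  rw [map_sub, map_mul, hX, rescale_rescale, rescale_rescale, map_sub]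
  ring_nf

end ExpSeries

section EGF

variable {a : ℕ} [NeZero a] (L : Finset (Fin a))

/-- The substitution `u ↦ (1 - t) u` in Carlitz's identity. -/
theorem egf_Aeul_eq :
    PowerSeries.mk (fun n => (n.factorial : ℚ)⁻¹ • (Aeul a n L : PowerSeries ℚ)) =
      PowerSeries.C (1 - PowerSeries.X) * PowerSeries.rescale (1 - PowerSeries.X)
        (expSeries fun s => (a : ℚ) * (s + 1) - #L) := by
  ext n : 1
  rw [PowerSeries.coeff_mk, coe_Aeul_eq, PowerSeries.coeff_C_mul, PowerSeries.coeff_rescale,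
    expSeries, PowerSeries.coeff_mk, mul_smul_comm, mul_smul_comm, ← mul_assoc, ← pow_succ']

end EGF

end WreathEulerian

/-- The denominator has constant term `1 - t`, a unit, so `Ring.inverse` inverts it;
`e^{cu}` is `rescale c exp`. -/
theorem Aeul_egf_closed_form (a : ℕ) [NeZero a] (L : Finset (Fin a)) :
    (PowerSeries.mk (fun n => (n.factorial : ℚ)⁻¹ • (Aeul a n L : PowerSeries ℚ)) :
      PowerSeries (PowerSeries ℚ)) =
      PowerSeries.C (R := PowerSeries ℚ) (1 - PowerSeries.X) *
        Ring.inverse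
          (- PowerSeries.C (R := PowerSeries ℚ) PowerSeries.X *
              PowerSeries.rescale ((L.card : PowerSeries ℚ) * (1 - PowerSeries.X))
                (PowerSeries.exp (PowerSeries ℚ)) +
            PowerSeries.rescale
                (((a : PowerSeries ℚ) - (L.card : PowerSeries ℚ)) * (PowerSeries.X - 1))
                (PowerSeries.exp (PowerSeries ℚ))) := by
  have hinv := congrArg (PowerSeries.rescale (1 - PowerSeries.X))
    (WreathEulerian.expSeries_mul_eq_one (#L : ℚ) (a : ℚ))
  rw [map_mul, map_one] at hinv
  rw [WreathEulerian.egf_Aeul_eq, ← map_natCast (PowerSeries.C (R := ℚ)) a,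
    ← map_natCast (PowerSeries.C (R := ℚ)) #L,
    WreathEulerian.neg_C_X_mul_rescale_exp_add_rescale_exp,
    Ring.eq_mul_inverse_iff_mul_eq _ _ _ (IsUnit.of_mul_eq_one_right _ hinv), mul_assoc, hinv,
    mul_one]
end

section
/- The bi-statistics (des̃_L, maj̃_L) and (des_{L'}, rmaj_{L',n}) with L' = {0,…,a-1} \ L are equidistributed on C_a ≀ S_n: for all s, m, the number of σ ∈ C_a ≀ S_n with des̃_L(σ) = s and maj̃_L(σ) = m equals the number of σ with des_{L'}(σ) = s and rmaj_{L',n}(σ) = m. -/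
open Finset Polynomial
open scoped Classical

/-- The "tilde" descent set `D̃es_L(σ) = {1 ≤ i ≤ n : σ(i) >_L σ(i+1)}` with `σ(n+1) := 0`
(note `wval σ (n+1)` is the letter `0`). -/
def DesT {a n : ℕ} [NeZero a] (L : Finset (Fin a)) (σ : ColPerm a n) : Finset ℕ :=
  (Finset.Icc 1 n).filter (fun i => rkL L (wval σ (i + 1)) < rkL L (wval σ i))

/-- `des̃_L(σ) = |D̃es_L(σ)|`. -/
def desT {a n : ℕ} [NeZero a] (L : Finset (Fin a)) (σ : ColPerm a n) : ℕ := (DesT L σ).card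

/-- `maj̃_L(σ) = Σ_{i ∈ D̃es_L(σ)} i`. -/
def majT {a n : ℕ} [NeZero a] (L : Finset (Fin a)) (σ : ColPerm a n) : ℕ :=
  ∑ i ∈ DesT L σ, i


/-- The reversal involution `σ ↦ σ·[n,…,1]`. -/
def revMap {a n : ℕ} (σ : ColPerm a n) : ColPerm a n :=
  (σ.1 * Fin.revPerm, σ.2 ∘ Fin.rev)

lemma revMap_revMap {a n : ℕ} (σ : ColPerm a n) : revMap (revMap σ) = σ := by
  unfold revMap
  refine Prod.ext ?_ ?_
  · ext x; simp [Fin.rev_rev]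
  · funext x; simp [Fin.rev_rev]

lemma rkL_compl {a : ℕ} (L : Finset (Fin a)) (x : Fin a × ℕ) :
    rkL Lᶜ x = - rkL L x := by
  unfold rkL
  by_cases h : x.2 = 0 <;> by_cases h2 : x.1 ∈ L <;> simp [h, h2]

lemma wval_rev {a n : ℕ} [NeZero a] (σ : ColPerm a n) (j : ℕ) (h1 : 1 ≤ j) (h2 : j ≤ n) :
    wval (revMap σ) j = wval σ (n + 1 - j) := by
  unfold wval revMap
  rw [dif_pos ⟨h1, h2⟩, dif_pos ⟨by omega, by omega⟩]
  have hrev : Fin.rev (⟨j - 1, by omega⟩ : Fin n) = ⟨n + 1 - j - 1, by omega⟩ := by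
    ext; simp [Fin.rev]; omega
  simp [hrev]

lemma wval_zero {a n : ℕ} [NeZero a] (σ : ColPerm a n) : wval σ 0 = (0, 0) := by
  unfold wval; rw [dif_neg (by omega)]

lemma wval_succ_n {a n : ℕ} [NeZero a] (σ : ColPerm a n) : wval σ (n + 1) = (0, 0) := by
  unfold wval; rw [dif_neg (by omega)]

lemma cond_rev {a n : ℕ} [NeZero a] (L : Finset (Fin a)) (σ : ColPerm a n) (i : ℕ)
    (h1 : 1 ≤ i) (h2 : i ≤ n) :
    (rkL Lᶜ (wval (revMap σ) (n - i + 1)) < rkL Lᶜ (wval (revMap σ) (n - i))) ↔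
    (rkL L (wval σ (i + 1)) < rkL L (wval σ i)) := by
  have e1 : wval (revMap σ) (n - i + 1) = wval σ i := by
    rw [wval_rev σ _ (by omega) (by omega)]; congr 1; omega
  have e2 : wval (revMap σ) (n - i) = wval σ (i + 1) := by
    rcases Nat.eq_or_lt_of_le h2 with h | h
    · have hz : n - i = 0 := by omega
      rw [hz, wval_zero]
      have : i + 1 = n + 1 := by omega
      rw [this, wval_succ_n]
    · rw [wval_rev σ _ (by omega) (by omega)]; congr 1; omega
  rw [e1, e2, rkL_compl, rkL_compl]
  omega

lemma DesL_rev {a n : ℕ} [NeZero a] (L : Finset (Fin a)) (σ : ColPerm a n) :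
    DesL Lᶜ (revMap σ) = (DesT L σ).image (fun i => n - i) := by
  ext j
  simp only [DesL, DesT, Finset.mem_filter, Finset.mem_range, Finset.mem_image,
    Finset.mem_Icc]
  constructor
  · rintro ⟨hj, hc⟩
    refine ⟨n - j, ⟨⟨by omega, by omega⟩, ?_⟩, by omega⟩
    have hji : j = n - (n - j) := by omega
    rw [← cond_rev L σ (n - j) (by omega) (by omega), ← hji]
    exact hc
  · rintro ⟨i, ⟨⟨hi1, hi2⟩, hc⟩, rfl⟩
    exact ⟨by omega, (cond_rev L σ i hi1 hi2).mpr hc⟩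

lemma DesT_le {a n : ℕ} [NeZero a] (L : Finset (Fin a)) (σ : ColPerm a n) :
    ∀ i ∈ DesT L σ, i ≤ n := by
  intro i hi
  simp only [DesT, Finset.mem_filter, Finset.mem_Icc] at hi
  omega

lemma desL_rev {a n : ℕ} [NeZero a] (L : Finset (Fin a)) (σ : ColPerm a n) :
    desL Lᶜ (revMap σ) = desT L σ := by
  unfold desL desT
  rw [DesL_rev, Finset.card_image_of_injOn]
  intro x hx y hy hxy
  have h' : n - x = n - y := hxy
  have := DesT_le L σ x hx
  have := DesT_le L σ y hy
  omega

lemma rmajL_rev {a n : ℕ} [NeZero a] (L : Finset (Fin a)) (σ : ColPerm a n) :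
    rmajL Lᶜ (revMap σ) = majT L σ := by
  unfold rmajL majT
  rw [DesL_rev, Finset.sum_image (by
    intro x hx y hy hxy
    have h' : n - x = n - y := hxy
    have := DesT_le L σ x hx
    have := DesT_le L σ y hy
    omega)]
  exact Finset.sum_congr rfl (fun i hi => by have := DesT_le L σ i hi; omega)

/-- The bi-statistics `(des̃_L, maj̃_L)` and `(des_{L'}, rmaj_{L',n})`, where
`L' = {0,…,a-1} \ L`, are equidistributed on `C_a ≀ S_n`. -/
theorem tilde_statistics_equidistributed (a n : ℕ) [NeZero a] (L : Finset (Fin a))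
    (s m : ℕ) :
    (Finset.univ.filter
        (fun σ : ColPerm a n => desT L σ = s ∧ majT L σ = m)).card =
    (Finset.univ.filter
        (fun σ : ColPerm a n => desL Lᶜ σ = s ∧ rmajL Lᶜ σ = m)).card := by
  refine Finset.card_bij' (fun σ _ => revMap σ) (fun σ _ => revMap σ) ?_ ?_ ?_ ?_
  · intro σ hσ
    simp only [Finset.mem_filter, Finset.mem_univ, true_and] at hσ ⊢
    rw [desL_rev, rmajL_rev]; exact hσ
  · intro σ hσ
    simp only [Finset.mem_filter, Finset.mem_univ, true_and] at hσ ⊢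
    rw [← desL_rev L (revMap σ), ← rmajL_rev L (revMap σ), revMap_revMap]
    exact hσ
  · intro σ _; exact revMap_revMap σ
  · intro σ _; exact revMap_revMap σ
end
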